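/- arXiv:math/0311310 — 2 statements merged into one kernel-verified Lean document; each statement's English description precedes it below -/
import Mathlib

section
/- The torsion subgroup of the group C(ℚ) of rational points on the Pell conic X² − ΔY² = 4 is: {(2,0), (−2,0), (1,1), (1,−1), (−1,1), (−1,−1)} if Δ = −3; {(2,0), (−2,0), (0,1), (0,−1)} if Δ = −4; and {(2,0), (−2,0)} for every other discriminant Δ. In particular, every torsion point of C(ℚ) has integral coordinates. -/
open Filter Real

/-- The defining equation of the Pell conic `X² - ΔY² = 4`. -/
def PellSol (Δ : ℚ) (P : ℚ × ℚ) : Prop := P.1 ^ 2 - Δ * P.2 ^ 2 = 4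

/-- The rational points on the Pell conic `X² - ΔY² = 4`. -/
def Conic (Δ : ℚ) : Type := {P : ℚ × ℚ // PellSol Δ P}

namespace Conic

variable {Δ : ℚ}

/-- Addition on the Pell conic. -/
instance : Add (Conic Δ) :=
  ⟨fun P Q => ⟨((P.val.1 * Q.val.1 + Δ * P.val.2 * Q.val.2) / 2,
    (P.val.1 * Q.val.2 + P.val.2 * Q.val.1) / 2), by
      have hP := P.property
      have hQ := Q.property
      unfold PellSol at *
      dsimp only
      linear_combination ((Q.val.1 ^ 2 - Δ * Q.val.2 ^ 2) / 4) * hP + hQ⟩⟩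

/-- The neutral element `(2,0)` of the Pell conic. -/
instance : Zero (Conic Δ) := ⟨⟨(2, 0), by unfold PellSol; norm_num⟩⟩

/-- The negative of a point on the Pell conic. -/
instance : Neg (Conic Δ) :=
  ⟨fun P => ⟨(P.val.1, -P.val.2), by
    have hP := P.property
    unfold PellSol at *
    dsimp only
    linear_combination hP⟩⟩

@[simp] lemma add_val (P Q : Conic Δ) :
    (P + Q).val = ((P.val.1 * Q.val.1 + Δ * P.val.2 * Q.val.2) / 2,
      (P.val.1 * Q.val.2 + P.val.2 * Q.val.1) / 2) := rfl

@[simp] lemma zero_val : ((0 : Conic Δ)).val = (2, 0) := rfl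

@[simp] lemma neg_val (P : Conic Δ) : (-P).val = (P.val.1, -P.val.2) := rfl

protected lemma add_assoc' (P Q R : Conic Δ) : P + Q + R = P + (Q + R) := by
  apply Subtype.ext
  rw [Prod.ext_iff, add_val, add_val, add_val, add_val]
  constructor <;> (dsimp only; ring)

protected lemma zero_add' (P : Conic Δ) : 0 + P = P := by
  apply Subtype.ext
  rw [Prod.ext_iff, add_val, zero_val]
  constructor <;> (dsimp only; ring)

protected lemma add_zero' (P : Conic Δ) : P + 0 = P := by
  apply Subtype.ext
  rw [Prod.ext_iff, add_val, zero_val]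
  constructor <;> (dsimp only; ring)

protected lemma neg_add_cancel' (P : Conic Δ) : -P + P = 0 := by
  have hP := P.property
  unfold PellSol at hP
  apply Subtype.ext
  rw [Prod.ext_iff, add_val, neg_val, zero_val]
  constructor
  · dsimp only
    linear_combination hP / 2
  · dsimp only; ring

protected lemma add_comm' (P Q : Conic Δ) : P + Q = Q + P := by
  apply Subtype.ext
  rw [Prod.ext_iff, add_val, add_val]
  constructor <;> (dsimp only; ring)

/-- The group structure on the rational points of the Pell conic. -/
instance : AddCommGroup (Conic Δ) where
  add := (· + ·)
  zero := 0
  neg := Neg.neg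
  nsmul := nsmulRec
  zsmul := zsmulRec
  add_assoc := Conic.add_assoc'
  zero_add := Conic.zero_add'
  add_zero := Conic.add_zero'
  neg_add_cancel := Conic.neg_add_cancel'
  add_comm := Conic.add_comm'

end Conic


section AuxTorsion

variable {Δq : ℚ}

lemma conic_rec (T : Conic Δq) (n : ℕ) :
    ((n + 2) • T).val.1 = T.val.1 * ((n + 1) • T).val.1 - (n • T).val.1 := by
  have h1 : (n + 2) • T = (n + 1) • T + T := by rw [succ_nsmul]
  have h2 : n • T = (n + 1) • T + (-T) := by
    rw [succ_nsmul]; abel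
  rw [h1, h2, Conic.add_val, Conic.add_val, Conic.neg_val]
  dsimp only
  ring

lemma padic_neg (T : Conic Δq) (p : ℕ) [hp : Fact p.Prime]
    (hv : padicValRat p T.val.1 < 0) (n : ℕ) :
    ((n + 1) • T).val.1 ≠ 0 ∧
      padicValRat p ((n + 1) • T).val.1 = (n + 1 : ℤ) * padicValRat p T.val.1 := by
  set x := T.val.1 with hxdef
  set v := padicValRat p x with hvdef
  have hx0 : x ≠ 0 := by
    intro h
    rw [h] at hvdef
    simp [padicValRat] at hvdef
    omega
  induction n using Nat.strong_induction_on with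
  | _ n ih =>
    match n with
    | 0 =>
      rw [one_nsmul]
      exact ⟨hx0, by push_cast; ring⟩
    | 1 =>
      have hrec := conic_rec T 0
      have h0 : ((0 : ℕ) • T).val.1 = 2 := by rw [zero_nsmul]; rfl
      have h1 : ((1 : ℕ) • T).val.1 = x := by rw [one_nsmul]
      rw [h0, h1] at hrec
      have hxx : x * x ≠ 0 := mul_ne_zero hx0 hx0
      have hvxx : padicValRat p (x * x) = 2 * v := by
        rw [padicValRat.mul hx0 hx0]; ring
      have hv2 : (0:ℤ) ≤ padicValRat p (2 : ℚ) := by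
        rw [show ((2:ℚ)) = ((2:ℤ):ℚ) by norm_num, padicValRat.of_int]
        positivity
      have hlt : padicValRat p (x * x) < padicValRat p (-(2:ℚ)) := by
        rw [padicValRat.neg]; omega
      have hne : x * x + -(2:ℚ) ≠ 0 := by
        intro h
        have : x * x = (2:ℚ) := by linarith [h]
        rw [this] at hvxx
        omega
      have := padicValRat.add_eq_of_lt (p := p) hne hxx (by norm_num) hlt
      constructor
      · rw [hrec, sub_eq_add_neg]; exact hne
      · rw [hrec, sub_eq_add_neg, this, hvxx]; push_cast; ring
    | (k + 2) =>
      obtain ⟨ha0, hva⟩ := ih (k + 1) (by omega)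
      obtain ⟨hb0, hvb⟩ := ih k (by omega)
      have hrec := conic_rec T (k + 1)
      have hxa : x * ((k + 2) • T).val.1 ≠ 0 := by
        have : ((k+1)+1) • T = (k + 2) • T := by norm_num
        rw [this] at ha0
        exact mul_ne_zero hx0 ha0
      have ha0' : ((k + 2) • T).val.1 ≠ 0 := by
        have : ((k+1)+1) • T = (k + 2) • T := by norm_num
        rw [this] at ha0; exact ha0
      have hva' : padicValRat p ((k + 2) • T).val.1 = (k + 2 : ℤ) * v := by
        have : ((k+1)+1) • T = (k + 2) • T := by norm_num
        rw [this] at hva; rw [hva]; push_cast; ring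
      have hvxa : padicValRat p (x * ((k + 2) • T).val.1) = (k + 3 : ℤ) * v := by
        rw [padicValRat.mul hx0 ha0', hva']; ring
      have hvb' : padicValRat p ((k + 1) • T).val.1 = (k + 1 : ℤ) * v := by
        rw [hvb]
      have hlt : padicValRat p (x * ((k + 2) • T).val.1)
          < padicValRat p (-(((k + 1) • T).val.1)) := by
        rw [padicValRat.neg, hvxa, hvb']; nlinarith
      have hne : x * ((k + 2) • T).val.1 + -(((k + 1) • T).val.1) ≠ 0 := by
        intro h
        have heq : x * ((k + 2) • T).val.1 = ((k + 1) • T).val.1 := by linarith [h]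
        rw [heq, hvb'] at hvxa
        nlinarith
      have hval := padicValRat.add_eq_of_lt (p := p) hne hxa (neg_ne_zero.mpr hb0) hlt
      have hrec' : ((k + 2 + 1) • T).val.1
          = x * ((k + 2) • T).val.1 + -(((k + 1) • T).val.1) := by
        have e1 : (k + 1 + 2 : ℕ) = k + 2 + 1 := by omega
        have e2 : (k + 1 + 1 : ℕ) = k + 2 := by omega
        rw [e1, e2] at hrec
        rw [hrec]; ring
      refine ⟨by rw [hrec']; exact hne, ?_⟩
      rw [hrec', hval, hvxa]; push_cast; ring

lemma den_ne_one_not_two (T : Conic Δq) (hden : T.val.1.den ≠ 1) (n : ℕ) :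
    ((n + 1) • T).val.1 ≠ 2 := by
  set x := T.val.1 with hxdef
  set p := x.den.minFac with hpdef
  have hdpos : 0 < x.den := x.pos
  have hp : p.Prime := Nat.minFac_prime hden
  haveI : Fact p.Prime := ⟨hp⟩
  have hpd : p ∣ x.den := Nat.minFac_dvd _
  have hv : padicValRat p x < 0 := by
    have hnum : padicValInt p x.num = 0 := by
      unfold padicValInt
      apply padicValNat.eq_zero_of_not_dvd
      intro hdvd
      have : p ∣ Nat.gcd x.num.natAbs x.den := Nat.dvd_gcd hdvd hpd
      rw [x.reduced] at this
      exact absurd (Nat.eq_one_of_dvd_one this) hp.one_lt.ne'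
    have hden1 : 1 ≤ padicValNat p x.den := one_le_padicValNat_of_dvd hdpos.ne' hpd
    unfold padicValRat
    rw [hnum]
    omega
  intro h2
  obtain ⟨-, hval⟩ := padic_neg T p hv n
  rw [h2] at hval
  have hv2 : (0:ℤ) ≤ padicValRat p (2 : ℚ) := by
    rw [show ((2:ℚ)) = ((2:ℤ):ℚ) by norm_num, padicValRat.of_int]
    positivity
  nlinarith

lemma abs_big_not_two (T : Conic Δq) (hx : 3 ≤ |T.val.1|) (n : ℕ) :
    2 < |((n + 1) • T).val.1| := by
  set x := T.val.1 with hxdef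
  suffices h : ∀ m : ℕ, 2 < |((m + 1) • T).val.1| ∧
      |((m + 1) • T).val.1| + 1 ≤ |((m + 2) • T).val.1| from (h n).1
  intro m
  induction m with
  | zero =>
    have h1 : ((1:ℕ) • T).val.1 = x := by rw [one_nsmul]
    have h0 : ((0:ℕ) • T).val.1 = 2 := by rw [zero_nsmul]; rfl
    have hrec := conic_rec T 0
    rw [h0, h1] at hrec
    constructor
    · rw [h1]; linarith
    · rw [h1, show (0 + 2 : ℕ) = 2 from rfl] at *
      rw [hrec]
      have habs : |x| * |x| - 2 ≤ |x * x - 2| := by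
        calc |x| * |x| - 2 = |x * x| - |(2:ℚ)| := by rw [abs_mul]; norm_num
        _ ≤ |x * x - 2| := abs_sub_abs_le_abs_sub _ _
      nlinarith [abs_nonneg x]
  | succ k ih =>
    obtain ⟨ih1, ih2⟩ := ih
    have h2 : (2:ℚ) < |((k + 2) • T).val.1| := by
      have := abs_nonneg ((k + 1) • T).val.1
      calc (2:ℚ) < |((k + 1) • T).val.1| := ih1
      _ ≤ |((k + 2) • T).val.1| := by linarith [ih2]
    refine ⟨h2, ?_⟩
    have hrec := conic_rec T (k + 1)
    rw [show (k + 1 + 2 : ℕ) = k + 3 from rfl, show (k + 1 + 1 : ℕ) = k + 2 from rfl] at hrec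
    rw [show (k + 1 + 2 : ℕ) = k + 3 from rfl]
    rw [hrec]
    have habs : |x| * |((k + 2) • T).val.1| - |((k + 1) • T).val.1|
        ≤ |x * ((k + 2) • T).val.1 - ((k + 1) • T).val.1| := by
      calc |x| * |((k + 2) • T).val.1| - |((k + 1) • T).val.1|
          = |x * ((k + 2) • T).val.1| - |((k + 1) • T).val.1| := by rw [abs_mul]
      _ ≤ _ := abs_sub_abs_le_abs_sub _ _
    nlinarith

lemma rat_clear (Δc : ℤ) (c : ℤ) (y : ℚ) (h : (Δc : ℚ) * y ^ 2 = (c : ℚ)) :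
    Δc * y.num ^ 2 = c * (y.den : ℤ) ^ 2 := by
  have hden : ((y.den : ℚ)) ≠ 0 := by
    exact_mod_cast y.den_nz
  have hy : (y.num : ℚ) = y * y.den := by
    rw [← div_eq_iff hden]
    exact Rat.num_div_den y
  have key : (Δc : ℚ) * (y.num : ℚ) ^ 2 = (c : ℚ) * (y.den : ℚ) ^ 2 := by
    rw [hy]; linear_combination ((y.den : ℚ)) ^ 2 * h
  exact_mod_cast key

lemma rat_pm_one (y : ℚ) (hn : y.num = 1 ∨ y.num = -1) (hd : y.den = 1) :
    y = 1 ∨ y = -1 := by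
  rcases hn with hn | hn
  · left; rw [← Rat.num_div_den y, hn, hd]; norm_num
  · right; rw [← Rat.num_div_den y, hn, hd]; norm_num

lemma not_unit_two : ¬ IsUnit (2 : ℤ) := by
  rw [Int.isUnit_iff]; norm_num

lemma core_three (d Δc m q : ℤ) (hsf : Squarefree d)
    (hΔ : Δc = if d % 4 = 1 then d else 4 * d)
    (hqpos : 0 < q) (hm0 : m ≠ 0) (hcop : IsCoprime m q)
    (hz : Δc * m ^ 2 = -3 * q ^ 2) :
    Δc = -3 ∧ q = 1 ∧ (m = 1 ∨ m = -1) := by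
  have hdvd : m ^ 2 ∣ 3 * q ^ 2 := ⟨-Δc, by linarith⟩
  have hm3 : m ^ 2 ∣ 3 := (IsCoprime.pow hcop).dvd_of_dvd_mul_right hdvd
  have hble := Int.le_of_dvd (by norm_num) hm3
  have hb1 : -1 ≤ m := by nlinarith [sq_nonneg (m + 2)]
  have hb2 : m ≤ 1 := by nlinarith [sq_nonneg (m - 2)]
  have hm1 : m = 1 ∨ m = -1 := by omega
  have hmsq : m ^ 2 = 1 := by rcases hm1 with h | h <;> rw [h] <;> ring
  have hΔq : Δc = -3 * q ^ 2 := by nlinarith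
  split_ifs at hΔ with h4
  · subst hΔ
    have hu : IsUnit q := hsf q ⟨-3, by linarith⟩
    have hq1 : q = 1 := by rcases Int.isUnit_iff.mp hu with h | h <;> omega
    exact ⟨by rw [hΔq, hq1]; ring, hq1, hm1⟩
  · exfalso
    have h4d : 4 * d = -3 * q ^ 2 := by rw [← hΔ, hΔq]
    have h2q : (2 : ℤ) ∣ q := by
      rcases Int.even_or_odd q with he | ho
      · exact he.two_dvd
      · exfalso
        obtain ⟨k, hk⟩ := ho
        have hqsq : q ^ 2 = 4 * (k * k + k) + 1 := by rw [hk]; ring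
        rw [hqsq] at h4d
        omega
    obtain ⟨r, hr⟩ := h2q
    have hdr : d = -3 * r ^ 2 := by nlinarith
    have hu : IsUnit r := hsf r ⟨-3, by linarith⟩
    have hr1 : r ^ 2 = 1 := by
      rcases Int.isUnit_iff.mp hu with h | h <;> rw [h] <;> ring
    have hd3 : d = -3 := by rw [hdr, hr1]; ring
    rw [hd3] at h4
    norm_num at h4

lemma core_four (d Δc m q : ℤ) (hsf : Squarefree d)
    (hΔ : Δc = if d % 4 = 1 then d else 4 * d)
    (hqpos : 0 < q) (hm0 : m ≠ 0) (hcop : IsCoprime m q)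
    (hz : Δc * m ^ 2 = -4 * q ^ 2) :
    Δc = -4 ∧ q = 1 ∧ (m = 1 ∨ m = -1) := by
  have hdvd : m ^ 2 ∣ 4 * q ^ 2 := ⟨-Δc, by linarith⟩
  have hm4 : m ^ 2 ∣ 4 := (IsCoprime.pow hcop).dvd_of_dvd_mul_right hdvd
  have hble := Int.le_of_dvd (by norm_num) hm4
  have hb1 : -2 ≤ m := by nlinarith [sq_nonneg (m + 3)]
  have hb2 : m ≤ 2 := by nlinarith [sq_nonneg (m - 3)]
  have hmcase : m = 1 ∨ m = -1 ∨ m = 2 ∨ m = -2 := by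
    rcases (by omega : m = 1 ∨ m = -1 ∨ m = 2 ∨ m = -2 ∨ m = 0) with h|h|h|h|h
    · exact Or.inl h
    · exact Or.inr (Or.inl h)
    · exact Or.inr (Or.inr (Or.inl h))
    · exact Or.inr (Or.inr (Or.inr h))
    · exact absurd h hm0
  rcases (by rcases hmcase with h|h|h|h <;> rw [h] <;> norm_num :
      m ^ 2 = 1 ∨ m ^ 2 = 4) with hm1 | hm1
  · have hΔq : Δc = -4 * q ^ 2 := by nlinarith
    split_ifs at hΔ with h4
    · exfalso
      subst hΔ
      exact not_unit_two (hsf 2 ⟨-(q ^ 2), by linarith⟩)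
    · have h4d : 4 * d = -4 * q ^ 2 := by rw [← hΔ, hΔq]
      have hdq : d = -(q ^ 2) := by linarith
      have hu : IsUnit q := hsf q ⟨-1, by linarith⟩
      have hq1 : q = 1 := by rcases Int.isUnit_iff.mp hu with h | h <;> omega
      have hmm : m = 1 ∨ m = -1 := by
        rcases hmcase with h|h|h|h
        · exact Or.inl h
        · exact Or.inr h
        all_goals (exfalso; rw [h] at hm1; norm_num at hm1)
      exact ⟨by rw [hΔq, hq1]; ring, hq1, hmm⟩
  · exfalso
    have hΔq : Δc = -(q ^ 2) := by nlinarith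
    have h2m : (2 : ℤ) ∣ m := by
      rcases hmcase with h|h|h|h <;> rw [h] <;> norm_num
      all_goals (exfalso; rw [h] at hm1; norm_num at hm1)
    have hodd : ¬ (2 : ℤ) ∣ q := fun h2q =>
      not_unit_two (hcop.isUnit_of_dvd' h2m h2q)
    have hqo : Odd q := Int.not_even_iff_odd.mp (fun he => hodd he.two_dvd)
    obtain ⟨k, hk⟩ := hqo
    have hqsq : q ^ 2 = 4 * (k * k + k) + 1 := by rw [hk]; ring
    split_ifs at hΔ with h4
    · subst hΔ
      rw [hqsq] at hΔq
      omega
    · have h4d : 4 * d = -(q ^ 2) := by rw [← hΔ, hΔq]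
      rw [hqsq] at h4d
      omega

lemma solve_three (d : ℤ) (hsf : Squarefree d) (Δc : ℤ)
    (hΔ : Δc = if d % 4 = 1 then d else 4 * d)
    (y : ℚ) (h : (Δc : ℚ) * y ^ 2 = -3) : Δc = -3 ∧ (y = 1 ∨ y = -1) := by
  have hz := rat_clear Δc (-3) y (by exact_mod_cast h)
  have hy0 : y ≠ 0 := by
    rintro rfl
    norm_num at h
  have hm0 : y.num ≠ 0 := Rat.num_ne_zero.mpr hy0
  have hcop : IsCoprime y.num ((y.den : ℤ)) := by
    rw [Int.isCoprime_iff_gcd_eq_one]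
    simpa [Int.gcd] using y.reduced
  obtain ⟨h1, h2, h3⟩ := core_three d Δc y.num (y.den : ℤ) hsf hΔ
    (by positivity) hm0 hcop (by linarith [hz])
  exact ⟨h1, rat_pm_one y h3 (by exact_mod_cast h2)⟩

lemma solve_four (d : ℤ) (hsf : Squarefree d) (Δc : ℤ)
    (hΔ : Δc = if d % 4 = 1 then d else 4 * d)
    (y : ℚ) (h : (Δc : ℚ) * y ^ 2 = -4) : Δc = -4 ∧ (y = 1 ∨ y = -1) := by
  have hz := rat_clear Δc (-4) y (by exact_mod_cast h)
  have hy0 : y ≠ 0 := by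
    rintro rfl
    norm_num at h
  have hm0 : y.num ≠ 0 := Rat.num_ne_zero.mpr hy0
  have hcop : IsCoprime y.num ((y.den : ℤ)) := by
    rw [Int.isCoprime_iff_gcd_eq_one]
    simpa [Int.gcd] using y.reduced
  obtain ⟨h1, h2, h3⟩ := core_four d Δc y.num (y.den : ℤ) hsf hΔ
    (by positivity) hm0 hcop (by linarith [hz])
  exact ⟨h1, rat_pm_one y h3 (by exact_mod_cast h2)⟩

end AuxTorsion

/-- The torsion points of `C(ℚ)` are exactly `{(±2,0), (±1,±1)}`
for `Δ = -3`, `{(±2,0), (0,±1)}` for `Δ = -4`, and `{(±2,0)}` for any other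
discriminant; in particular all torsion points have integral coordinates. -/
theorem torsion_classification (d : ℤ) (hsf : Squarefree d) (hd0 : d ≠ 0) (hd1 : d ≠ 1)
    (Δ : ℤ) (hΔ : Δ = if d % 4 = 1 then d else 4 * d) :
    (∀ T : Conic (Δ : ℚ), IsOfFinAddOrder T ↔ T.val ∈
      (if Δ = -3 then
        ({(2, 0), (-2, 0), (1, 1), (1, -1), (-1, 1), (-1, -1)} : Set (ℚ × ℚ))
      else if Δ = -4 then
        ({(2, 0), (-2, 0), (0, 1), (0, -1)} : Set (ℚ × ℚ))
      else ({(2, 0), (-2, 0)} : Set (ℚ × ℚ)))) ∧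
    (∀ T : Conic (Δ : ℚ), IsOfFinAddOrder T → ∃ a b : ℤ, T.val = ((a : ℚ), (b : ℚ))) := by
  have hΔ0 : Δ ≠ 0 := by
    split_ifs at hΔ with h4 <;> omega
  have hΔq0 : ((Δ : ℤ) : ℚ) ≠ 0 := Int.cast_ne_zero.mpr hΔ0
  have main : ∀ T : Conic (Δ : ℚ), IsOfFinAddOrder T ↔ T.val ∈
      (if Δ = -3 then
        ({(2, 0), (-2, 0), (1, 1), (1, -1), (-1, 1), (-1, -1)} : Set (ℚ × ℚ))
      else if Δ = -4 then
        ({(2, 0), (-2, 0), (0, 1), (0, -1)} : Set (ℚ × ℚ))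
      else ({(2, 0), (-2, 0)} : Set (ℚ × ℚ))) := by
    intro T
    constructor
    · intro hT
      obtain ⟨n, hn, hnT⟩ := isOfFinAddOrder_iff_nsmul_eq_zero.mp hT
      obtain ⟨k, rfl⟩ : ∃ k, n = k + 1 := ⟨n - 1, by omega⟩
      have hf : ((k + 1) • T).val.1 = 2 := by rw [hnT]; rfl
      have hden : T.val.1.den = 1 := by
        by_contra hd
        exact den_ne_one_not_two T hd k hf
      have hxint : T.val.1 = (T.val.1.num : ℚ) := by
        conv_lhs => rw [← Rat.num_div_den T.val.1]
        rw [hden]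
        norm_num
      have hsmall : |T.val.1| < 3 := by
        by_contra h3
        push_neg at h3
        have := abs_big_not_two T h3 k
        rw [hf] at this
        norm_num at this
      have hbnd : -3 < T.val.1.num ∧ T.val.1.num < 3 := by
        obtain ⟨hl, hr⟩ := abs_lt.mp hsmall
        rw [hxint] at hl hr
        exact ⟨by exact_mod_cast hl, by exact_mod_cast hr⟩
      have hP : T.val.1 ^ 2 - ((Δ : ℤ) : ℚ) * T.val.2 ^ 2 = 4 := T.property
      have hcases : T.val.1.num = -2 ∨ T.val.1.num = -1 ∨ T.val.1.num = 0 ∨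
          T.val.1.num = 1 ∨ T.val.1.num = 2 := by omega
      rcases hcases with hc | hc | hc | hc | hc
      · -- x = -2, y = 0
        have hx : T.val.1 = -2 := by rw [hxint, hc]; norm_num
        have hy : T.val.2 = 0 := by
          have h0 : ((Δ : ℤ) : ℚ) * T.val.2 ^ 2 = 0 := by rw [hx] at hP; linarith
          rcases mul_eq_zero.mp h0 with h | h
          · exact absurd h hΔq0
          · exact pow_eq_zero_iff (by norm_num) |>.mp h
        have hval : T.val = (-2, 0) := Prod.ext_iff.mpr ⟨hx, hy⟩
        split_ifs <;> simp [hval]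
      · -- x = -1 : Δ = -3
        have hx : T.val.1 = -1 := by rw [hxint, hc]; norm_num
        have h3 : ((Δ : ℤ) : ℚ) * T.val.2 ^ 2 = -3 := by rw [hx] at hP; linarith
        obtain ⟨hΔ3, hy⟩ := solve_three d hsf Δ hΔ T.val.2 h3
        rcases hy with hy | hy
        · have hval : T.val = (-1, 1) := Prod.ext_iff.mpr ⟨hx, hy⟩
          split_ifs <;> first | omega | simp [hval]
        · have hval : T.val = (-1, -1) := Prod.ext_iff.mpr ⟨hx, hy⟩
          split_ifs <;> first | omega | simp [hval]
      · -- x = 0 : Δ = -4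
        have hx : T.val.1 = 0 := by rw [hxint, hc]; norm_num
        have h4 : ((Δ : ℤ) : ℚ) * T.val.2 ^ 2 = -4 := by rw [hx] at hP; linarith
        obtain ⟨hΔ4, hy⟩ := solve_four d hsf Δ hΔ T.val.2 h4
        rcases hy with hy | hy
        · have hval : T.val = (0, 1) := Prod.ext_iff.mpr ⟨hx, hy⟩
          split_ifs <;> first | omega | simp [hval]
        · have hval : T.val = (0, -1) := Prod.ext_iff.mpr ⟨hx, hy⟩
          split_ifs <;> first | omega | simp [hval]
      · -- x = 1 : Δ = -3
        have hx : T.val.1 = 1 := by rw [hxint, hc]; norm_num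
        have h3 : ((Δ : ℤ) : ℚ) * T.val.2 ^ 2 = -3 := by rw [hx] at hP; linarith
        obtain ⟨hΔ3, hy⟩ := solve_three d hsf Δ hΔ T.val.2 h3
        rcases hy with hy | hy
        · have hval : T.val = (1, 1) := Prod.ext_iff.mpr ⟨hx, hy⟩
          split_ifs <;> first | omega | simp [hval]
        · have hval : T.val = (1, -1) := Prod.ext_iff.mpr ⟨hx, hy⟩
          split_ifs <;> first | omega | simp [hval]
      · -- x = 2, y = 0
        have hx : T.val.1 = 2 := by rw [hxint, hc]; norm_num
        have hy : T.val.2 = 0 := by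
          have h0 : ((Δ : ℤ) : ℚ) * T.val.2 ^ 2 = 0 := by rw [hx] at hP; linarith
          rcases mul_eq_zero.mp h0 with h | h
          · exact absurd h hΔq0
          · exact pow_eq_zero_iff (by norm_num) |>.mp h
        have hval : T.val = (2, 0) := Prod.ext_iff.mpr ⟨hx, hy⟩
        split_ifs <;> simp [hval]
    · intro hmem
      split_ifs at hmem with h3 h4
      · have hΔ3 : ((Δ : ℤ) : ℚ) = -3 := by rw [h3]; norm_num
        refine isOfFinAddOrder_iff_nsmul_eq_zero.mpr ⟨6, by norm_num, ?_⟩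
        have h6 : (6 : ℕ) • T = T + T + T + T + T + T := by
          rw [show (6 : ℕ) = 1 + 1 + 1 + 1 + 1 + 1 from rfl]
          simp only [add_nsmul, one_nsmul]
        rw [h6]
        simp only [Set.mem_insert_iff, Set.mem_singleton_iff] at hmem
        apply Subtype.ext
        rcases hmem with h | h | h | h | h | h <;>
          · rw [Prod.ext_iff]
            simp only [Conic.add_val, Conic.zero_val, h, hΔ3]
            norm_num
      · have hΔ4 : ((Δ : ℤ) : ℚ) = -4 := by rw [h4]; norm_num
        refine isOfFinAddOrder_iff_nsmul_eq_zero.mpr ⟨4, by norm_num, ?_⟩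
        have h4' : (4 : ℕ) • T = T + T + T + T := by
          rw [show (4 : ℕ) = 1 + 1 + 1 + 1 from rfl]
          simp only [add_nsmul, one_nsmul]
        rw [h4']
        simp only [Set.mem_insert_iff, Set.mem_singleton_iff] at hmem
        apply Subtype.ext
        rcases hmem with h | h | h | h <;>
          · rw [Prod.ext_iff]
            simp only [Conic.add_val, Conic.zero_val, h, hΔ4]
            norm_num
      · refine isOfFinAddOrder_iff_nsmul_eq_zero.mpr ⟨2, by norm_num, ?_⟩
        have h2 : (2 : ℕ) • T = T + T := by
          rw [show (2 : ℕ) = 1 + 1 from rfl]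
          simp only [add_nsmul, one_nsmul]
        rw [h2]
        simp only [Set.mem_insert_iff, Set.mem_singleton_iff] at hmem
        apply Subtype.ext
        rcases hmem with h | h <;>
          · rw [Prod.ext_iff]
            simp only [Conic.add_val, Conic.zero_val, h]
            norm_num
  refine ⟨main, ?_⟩
  intro T hT
  have hmem := (main T).mp hT
  split_ifs at hmem <;>
    simp only [Set.mem_insert_iff, Set.mem_singleton_iff] at hmem
  · rcases hmem with h | h | h | h | h | h
    · exact ⟨2, 0, by rw [h]; norm_num⟩
    · exact ⟨-2, 0, by rw [h]; norm_num⟩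
    · exact ⟨1, 1, by rw [h]; norm_num⟩
    · exact ⟨1, -1, by rw [h]; norm_num⟩
    · exact ⟨-1, 1, by rw [h]; norm_num⟩
    · exact ⟨-1, -1, by rw [h]; norm_num⟩
  · rcases hmem with h | h | h | h
    · exact ⟨2, 0, by rw [h]; norm_num⟩
    · exact ⟨-2, 0, by rw [h]; norm_num⟩
    · exact ⟨0, 1, by rw [h]; norm_num⟩
    · exact ⟨0, -1, by rw [h]; norm_num⟩
  · rcases hmem with h | h
    · exact ⟨2, 0, by rw [h]; norm_num⟩
    · exact ⟨-2, 0, by rw [h]; norm_num⟩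
end

section
/- Suppose Δ > 0, and let a, b be positive integers with ab = Δ. The first descendant T_a : ax² − by² = 4 has a rational point (x,y) ∈ ℚ × ℚ if and only if a is a quadratic residue modulo q for every odd prime q dividing b, and −b is a quadratic residue modulo p for every odd prime p dividing a. -/
lemma crt2 (m n u v : ℤ) (h : IsCoprime m n) : ∃ x : ℤ, m ∣ (x - u) ∧ n ∣ (x - v) := by
  obtain ⟨c, e, hce⟩ := h
  refine ⟨u * e * n + v * c * m, ⟨(v - u) * c, by linear_combination u * hce⟩,
    ⟨(u - v) * e, by linear_combination v * hce⟩⟩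

lemma root_of_isSquare {p : ℕ} (hp : p.Prime) {x : ℤ} (h : IsSquare ((x : ℤ) : ZMod p)) :
    ∃ t : ℤ, (p : ℤ) ∣ t ^ 2 - x := by
  haveI : Fact p.Prime := ⟨hp⟩
  obtain ⟨r, hr⟩ := h
  refine ⟨(r.val : ℤ), ?_⟩
  rw [← ZMod.intCast_zmod_eq_zero_iff_dvd]
  push_cast
  rw [ZMod.natCast_val, ZMod.cast_id]
  rw [hr]; ring

lemma glue (b : ℤ) : ∀ n : ℕ, Squarefree n →
    (∀ p : ℕ, p.Prime → p ∣ n → ∃ t : ℤ, (p : ℤ) ∣ t ^ 2 - b) →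
    ∃ t : ℤ, (n : ℤ) ∣ t ^ 2 - b := by
  intro n
  induction n using Nat.strong_induction_on with
  | _ n ih =>
    intro hsf hall
    rcases eq_or_ne n 1 with rfl | hn1
    · exact ⟨0, by simp⟩
    have hn0 : n ≠ 0 := hsf.ne_zero
    set p := n.minFac with hp
    have hpp : p.Prime := Nat.minFac_prime hn1
    have hpd : p ∣ n := Nat.minFac_dvd n
    obtain ⟨k, hk⟩ := hpd
    have hkd : k ∣ n := ⟨p, by rw [hk]; ring⟩
    have hknz : k ≠ 0 := by rintro rfl; simp [hk] at hn0
    have hkltn : k < n := by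
      rw [hk]
      exact lt_mul_of_one_lt_left (Nat.pos_of_ne_zero hknz) hpp.one_lt
    have hpk : ¬ p ∣ k := by
      intro hd
      exact hpp.not_isUnit (hsf p (by obtain ⟨j, hj⟩ := hd; exact ⟨j, by rw [hk, hj]; ring⟩))
    have hcop : Nat.Coprime p k := (Nat.Prime.coprime_iff_not_dvd hpp).mpr hpk
    obtain ⟨t₁, ht₁⟩ := hall p hpp (Nat.minFac_dvd n)
    obtain ⟨t₂, ht₂⟩ := ih k hkltn (hsf.squarefree_of_dvd hkd)
      (fun q hq hqd => hall q hq (hqd.trans hkd))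
    obtain ⟨x, hx1, hx2⟩ := crt2 (p : ℤ) (k : ℤ) t₁ t₂ (Nat.isCoprime_iff_coprime.mpr hcop)
    refine ⟨x, ?_⟩
    rw [hk]
    push_cast
    have key : ∀ (q : ℕ) (t : ℤ), (q : ℤ) ∣ x - t → (q : ℤ) ∣ t ^ 2 - b → (q : ℤ) ∣ x ^ 2 - b := by
      intro q t h1 h2
      have := dvd_add (h1.mul_right (x + t)) h2
      have e : (x - t) * (x + t) + (t ^ 2 - b) = x ^ 2 - b := by ring
      rwa [e] at this
    exact (Nat.isCoprime_iff_coprime.mpr hcop).mul_dvd (key p t₁ hx1 ht₁) (key k t₂ hx2 ht₂)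

lemma sqrt_sq_lt {x : ℤ} (hx : 0 < x) (hns : ¬ IsSquare x) :
    ((Nat.sqrt x.natAbs : ℤ)) ^ 2 < x := by
  have hxa : ((x.natAbs : ℤ)) = x := Int.natAbs_of_nonneg hx.le
  set s := x.natAbs.sqrt with hs
  have h1 : s * s ≤ x.natAbs := by rw [← pow_two]; exact Nat.sqrt_le' _
  have h2 : s * s ≠ x.natAbs := by
    intro h
    exact hns ⟨(s : ℤ), by rw [← hxa, ← h]; push_cast; ring⟩
  have h3 : s * s < x.natAbs := lt_of_le_of_ne h1 h2
  have : ((s * s : ℕ) : ℤ) < ((x.natAbs : ℕ) : ℤ) := by exact_mod_cast h3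
  rw [hxa] at this
  calc ((s : ℤ)) ^ 2 = ((s * s : ℕ) : ℤ) := by push_cast; ring
  _ < x := this

set_option maxHeartbeats 1000000 in
/-- Core descent lemma (Legendre-style). -/
lemma core (A B C : ℤ) (hA : 0 < A) (hB : 0 < B) (hC : 0 < C)
    (hAB : ¬ IsSquare (A * B)) (hCA : ¬ IsSquare (C * A)) (hCB : ¬ IsSquare (C * B))
    (l₁ l₂ l₃ : ℤ)
    (hφ : ∀ u v w : ℤ, (C * A * B) ∣ (l₁ * u + l₂ * v + l₃ * w) →
      (C * A * B) ∣ (A * u ^ 2 - B * v ^ 2 - C * w ^ 2)) :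
    ∃ u v w : ℤ, A * u ^ 2 - B * v ^ 2 = C * w ^ 2 ∧ ¬(u = 0 ∧ v = 0 ∧ w = 0) := by
  set m : ℕ := (C * A * B).natAbs with hm
  have hmpos : 0 < (C * A * B) := by positivity
  have hmz : ((m : ℤ)) = C * A * B := Int.natAbs_of_nonneg hmpos.le
  haveI : NeZero m := ⟨by simpa [hm, Int.natAbs_eq_zero] using hmpos.ne'⟩
  set s₁ : ℕ := Nat.sqrt (C * B).natAbs with hs₁
  set s₂ : ℕ := Nat.sqrt (C * A).natAbs with hs₂
  set s₃ : ℕ := Nat.sqrt (A * B).natAbs with hs₃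
  have hb₁ : ((s₁ : ℤ)) ^ 2 < C * B := sqrt_sq_lt (by positivity) hCB
  have hb₂ : ((s₂ : ℤ)) ^ 2 < C * A := sqrt_sq_lt (by positivity) hCA
  have hb₃ : ((s₃ : ℤ)) ^ 2 < A * B := sqrt_sq_lt (by positivity) hAB
  set S : Finset (ℤ × ℤ × ℤ) :=
    Finset.Icc 0 (s₁ : ℤ) ×ˢ (Finset.Icc 0 (s₂ : ℤ) ×ˢ Finset.Icc 0 (s₃ : ℤ)) with hS
  have hcardIcc : ∀ s : ℕ, (Finset.Icc (0 : ℤ) (s : ℤ)).card = s + 1 := by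
    intro s; rw [Int.card_Icc]; simp
  have hcardS : S.card = (s₁ + 1) * ((s₂ + 1) * (s₃ + 1)) := by
    rw [hS, Finset.card_product, Finset.card_product, hcardIcc, hcardIcc, hcardIcc]
  have hcard : Fintype.card (ZMod m) < S.card := by
    rw [ZMod.card, hcardS]
    by_contra hle
    push_neg at hle
    have hsq : ((s₁ + 1) * ((s₂ + 1) * (s₃ + 1))) * ((s₁ + 1) * ((s₂ + 1) * (s₃ + 1))) ≤ m * m :=
      Nat.mul_le_mul hle hle
    have e : m * m = (C * B).natAbs * ((C * A).natAbs * (A * B).natAbs) := by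
      rw [hm, ← Int.natAbs_mul, ← Int.natAbs_mul, ← Int.natAbs_mul]; congr 1; ring
    have t₁ : (C * B).natAbs < (s₁ + 1) * (s₁ + 1) := by
      have := Nat.lt_succ_sqrt' (C * B).natAbs; rw [← pow_two]; simpa [hs₁] using this
    have t₂ : (C * A).natAbs < (s₂ + 1) * (s₂ + 1) := by
      have := Nat.lt_succ_sqrt' (C * A).natAbs; rw [← pow_two]; simpa [hs₂] using this
    have t₃ : (A * B).natAbs < (s₃ + 1) * (s₃ + 1) := by
      have := Nat.lt_succ_sqrt' (A * B).natAbs; rw [← pow_two]; simpa [hs₃] using this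
    have key : m * m < ((s₁ + 1) * (s₁ + 1)) * (((s₂ + 1) * (s₂ + 1)) * ((s₃ + 1) * (s₃ + 1))) := by
      rw [e]
      exact Nat.mul_lt_mul'' t₁ (Nat.mul_lt_mul'' t₂ t₃)
    have e2 : ((s₁ + 1) * (s₁ + 1)) * (((s₂ + 1) * (s₂ + 1)) * ((s₃ + 1) * (s₃ + 1)))
        = ((s₁ + 1) * ((s₂ + 1) * (s₃ + 1))) * ((s₁ + 1) * ((s₂ + 1) * (s₃ + 1))) := by ring
    rw [e2] at key
    exact absurd hsq (not_le.mpr key)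
  obtain ⟨x, hxS, y, hyS, hxy, hfeq⟩ :=
    Finset.exists_ne_map_eq_of_card_lt_of_maps_to (t := (Finset.univ : Finset (ZMod m)))
      (by simpa using hcard)
      (f := fun z : ℤ × ℤ × ℤ => (((l₁ * z.1 + l₂ * z.2.1 + l₃ * z.2.2 : ℤ) : ZMod m)))
      (fun z _ => Finset.mem_univ _)
  set u : ℤ := x.1 - y.1 with hu
  set v : ℤ := x.2.1 - y.2.1 with hv
  set w : ℤ := x.2.2 - y.2.2 with hw
  have hdvdL : (C * A * B) ∣ (l₁ * u + l₂ * v + l₃ * w) := by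
    rw [← hmz, ← ZMod.intCast_zmod_eq_zero_iff_dvd]
    push_cast
    have : ((l₁ * x.1 + l₂ * x.2.1 + l₃ * x.2.2 : ℤ) : ZMod m)
        = ((l₁ * y.1 + l₂ * y.2.1 + l₃ * y.2.2 : ℤ) : ZMod m) := hfeq
    push_cast at this
    rw [hu, hv, hw]
    push_cast
    linear_combination this
  have hQ : (C * A * B) ∣ (A * u ^ 2 - B * v ^ 2 - C * w ^ 2) := hφ u v w hdvdL
  rw [hS] at hxS hyS
  simp only [Finset.mem_product, Finset.mem_Icc] at hxS hyS
  obtain ⟨⟨hx1a, hx1b⟩, ⟨hx2a, hx2b⟩, ⟨hx3a, hx3b⟩⟩ := hxS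
  obtain ⟨⟨hy1a, hy1b⟩, ⟨hy2a, hy2b⟩, ⟨hy3a, hy3b⟩⟩ := hyS
  have hu2 : u ^ 2 ≤ ((s₁ : ℤ)) ^ 2 := sq_le_sq' (by rw [hu]; linarith) (by rw [hu]; linarith)
  have hv2 : v ^ 2 ≤ ((s₂ : ℤ)) ^ 2 := sq_le_sq' (by rw [hv]; linarith) (by rw [hv]; linarith)
  have hw2 : w ^ 2 ≤ ((s₃ : ℤ)) ^ 2 := sq_le_sq' (by rw [hw]; linarith) (by rw [hw]; linarith)
  obtain ⟨k, hk⟩ := hQ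
  have hkub : k < 1 := by
    have h1 : C * A * B * k < C * A * B * 1 := by
      rw [← hk, mul_one]
      nlinarith [sq_nonneg v, sq_nonneg w, hu2, hb₁]
    exact lt_of_mul_lt_mul_left h1 hmpos.le
  have hklb : -2 < k := by
    have h1 : C * A * B * (-2) < C * A * B * k := by
      rw [← hk]
      nlinarith [sq_nonneg u, hv2, hb₂, hw2, hb₃]
    exact lt_of_mul_lt_mul_left h1 hmpos.le
  have hxyne : ¬(u = 0 ∧ v = 0 ∧ w = 0) := by
    rintro ⟨h1, h2, h3⟩
    apply hxy
    rw [Prod.ext_iff]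
    refine ⟨by rw [hu] at h1; linarith, ?_⟩
    rw [Prod.ext_iff]
    exact ⟨by rw [hv] at h2; linarith, by rw [hw] at h3; linarith⟩
  have hk01 : k = 0 ∨ k = -1 := by omega
  rcases hk01 with rfl | rfl
  · exact ⟨u, v, w, by linarith [hk], hxyne⟩
  · refine ⟨u * w + B * v, A * u + v * w, w ^ 2 - A * B, by linear_combination (w ^ 2 - A * B) * hk, ?_⟩
    rintro ⟨-, -, h3⟩
    exact hAB ⟨w, by linarith [sq (w), h3, (by ring : w ^ 2 = w * w)]⟩

lemma coprime_of_squarefree_mul {a b : ℤ} (h : Squarefree (a * b)) : IsCoprime a b :=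
  (squarefree_mul_iff.mp h).1.isCoprime

lemma nsq_of_squarefree {d : ℤ} (hsf : Squarefree d) (hd1 : d ≠ 1) : ¬ IsSquare d := by
  rintro ⟨k, hk⟩
  have : IsUnit k := hsf k (by rw [hk])
  rcases Int.isUnit_iff.mp this with rfl | rfl
  · exact hd1 (by rw [hk]; ring)
  · exact hd1 (by rw [hk]; ring)

lemma nsq_four_mul {d : ℤ} (hd : ¬ IsSquare d) : ¬ IsSquare (4 * d) := by
  rintro ⟨k, hk⟩
  have h2 : (2 : ℤ) ∣ k := by
    have hpr : Prime (2 : ℤ) := Int.prime_two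
    rcases (hpr.dvd_mul.mp ⟨2 * d, by linarith⟩) with h | h <;> exact h
  obtain ⟨j, rfl⟩ := h2
  exact hd ⟨j, by linarith⟩

lemma nsq_two_mul_odd {a : ℤ} (hodd : ¬ (2 : ℤ) ∣ a) : ¬ IsSquare (2 * a) := by
  rintro ⟨k, hk⟩
  have h2 : (2 : ℤ) ∣ k := by
    have hpr : Prime (2 : ℤ) := Int.prime_two
    rcases (hpr.dvd_mul.mp ⟨a, by linarith⟩) with h | h <;> exact h
  obtain ⟨j, rfl⟩ := h2
  exact hodd ⟨j * j, by linarith⟩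

lemma rat_point_of_int {a b : ℤ} (hns : ¬ IsSquare (a * b)) {u v w : ℤ}
    (hnt : ¬(u = 0 ∧ v = 0 ∧ w = 0)) (heq : a * u ^ 2 - b * v ^ 2 = 4 * w ^ 2) :
    ∃ x y : ℚ, (a : ℚ) * x ^ 2 - (b : ℚ) * y ^ 2 = 4 := by
  have ha0 : a ≠ 0 := by rintro rfl; exact hns ⟨0, by ring⟩
  have hb0 : b ≠ 0 := by rintro rfl; exact hns ⟨0, by ring⟩
  by_cases hw : w = 0
  · subst hw
    exfalso
    have huv : a * u ^ 2 = b * v ^ 2 := by linarith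
    have hu0 : u ≠ 0 := by
      rintro rfl
      have : v = 0 := by
        have : b * v ^ 2 = 0 := by linarith
        rcases mul_eq_zero.mp this with h | h
        · exact absurd h hb0
        · exact pow_eq_zero_iff (by norm_num : (2:ℕ) ≠ 0) |>.mp h
      exact hnt ⟨rfl, this, rfl⟩
    have hv0 : v ≠ 0 := by
      rintro rfl
      have : a * u ^ 2 = 0 := by linarith
      rcases mul_eq_zero.mp this with h | h
      · exact absurd h ha0
      · exact hu0 (pow_eq_zero_iff (by norm_num : (2:ℕ) ≠ 0) |>.mp h)
    have key : (b * v ^ 2) ^ 2 = (u * v) ^ 2 * (a * b) := by linear_combination (-(b * v ^ 2)) * huv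
    have hdvd : (u * v) ^ 2 ∣ (b * v ^ 2) ^ 2 := ⟨a * b, key⟩
    obtain ⟨j, hj⟩ := (Int.pow_dvd_pow_iff (two_ne_zero)).mp hdvd
    apply hns
    refine ⟨j, ?_⟩
    have huv0 : (u * v) ^ 2 ≠ 0 := pow_ne_zero _ (mul_ne_zero hu0 hv0)
    have : (u * v) ^ 2 * (a * b) = (u * v) ^ 2 * (j * j) := by
      rw [← key, hj]; ring
    exact mul_left_cancel₀ huv0 this
  · have hwq : ((w : ℚ)) ≠ 0 := Int.cast_ne_zero.mpr hw
    refine ⟨(u : ℚ) / w, (v : ℚ) / w, ?_⟩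
    have hc : ((a * u ^ 2 - b * v ^ 2 : ℤ) : ℚ) = ((4 * w ^ 2 : ℤ) : ℚ) := by exact_mod_cast heq
    push_cast at hc
    field_simp
    linear_combination hc

lemma key_step (e f : ℤ) (r : ℕ) (hr : r.Prime) (hr2 : r ≠ 2) (hrf : (r : ℤ) ∣ f)
    (hrf2 : ¬ ((r : ℤ) * (r : ℤ)) ∣ f)
    (hsol : ∃ n : ℕ, 0 < n ∧ ∃ X Y : ℤ, e * X ^ 2 + f * Y ^ 2 = 4 * (n : ℤ) ^ 2) :
    IsSquare ((e : ZMod r)) := by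
  classical
  haveI : Fact r.Prime := ⟨hr⟩
  have pr : Prime (r : ℤ) := Nat.prime_iff_prime_int.mp hr
  have hrz : (r : ℤ) ≠ 0 := by exact_mod_cast hr.ne_zero
  set P : ℕ → Prop := fun n => 0 < n ∧ ∃ X Y : ℤ, e * X ^ 2 + f * Y ^ 2 = 4 * (n : ℤ) ^ 2 with hP
  have hex : ∃ n, P n := hsol
  obtain ⟨hn0, X, Y, hXY⟩ := Nat.find_spec hex
  set n : ℕ := Nat.find hex with hn
  have hrX : ¬ (r : ℤ) ∣ X := by
    intro hdX
    have hX2 : (r : ℤ) ∣ X ^ 2 := dvd_pow hdX two_ne_zero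
    have h4 : (r : ℤ) ∣ 4 * (n : ℤ) ^ 2 := by
      rw [← hXY]; exact dvd_add (hX2.mul_left e) (hrf.mul_right _)
    have hrn : (r : ℤ) ∣ (n : ℤ) := by
      rcases pr.dvd_mul.mp h4 with h | h
      · exfalso
        have h2 : (r : ℤ) ∣ 2 := by
          rcases pr.dvd_mul.mp (show (r : ℤ) ∣ 2 * 2 by norm_num at h ⊢; exact h) with h' | h' <;>
            exact h'
        have := Int.le_of_dvd (by norm_num) h2
        have h2le : r ≤ 2 := by exact_mod_cast this
        exact hr2 (le_antisymm h2le hr.two_le)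
      · exact pr.dvd_of_dvd_pow h
    have hrY : (r : ℤ) ∣ Y := by
      obtain ⟨f₁, hf₁⟩ := hrf
      have hf₁r : ¬ (r : ℤ) ∣ f₁ := fun hd => hrf2 (by rw [hf₁]; exact mul_dvd_mul_left _ hd)
      have h1 : (r : ℤ) * (r : ℤ) ∣ e * X ^ 2 := by
        have : (r : ℤ) * (r : ℤ) ∣ X ^ 2 := by rw [pow_two]; exact mul_dvd_mul hdX hdX
        exact this.mul_left e
      have h2 : (r : ℤ) * (r : ℤ) ∣ 4 * (n : ℤ) ^ 2 := by
        have : (r : ℤ) * (r : ℤ) ∣ (n : ℤ) ^ 2 := by rw [pow_two]; exact mul_dvd_mul hrn hrn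
        exact this.mul_left 4
      have h3 : (r : ℤ) * (r : ℤ) ∣ f * Y ^ 2 := by
        have : f * Y ^ 2 = 4 * (n : ℤ) ^ 2 - e * X ^ 2 := by linarith
        rw [this]; exact dvd_sub h2 h1
      have h5 : (r : ℤ) ∣ f₁ * Y ^ 2 := by
        obtain ⟨c, hc⟩ := h3
        rw [hf₁] at hc
        refine ⟨c, mul_left_cancel₀ hrz ?_⟩
        linear_combination hc
      rcases pr.dvd_mul.mp h5 with h | h
      · exact absurd h hf₁r
      · exact pr.dvd_of_dvd_pow h
    -- descend
    obtain ⟨X', rfl⟩ := hdX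
    obtain ⟨Y', rfl⟩ := hrY
    obtain ⟨n', hn'⟩ := (Int.natCast_dvd_natCast (m := r) (n := n)).mp hrn
    have hn'0 : 0 < n' := by
      rcases Nat.eq_zero_or_pos n' with rfl | h
      · rw [Nat.mul_zero] at hn'; exact absurd hn' hn0.ne'
      · exact h
    have hlt : n' < n := by
      rw [hn']
      calc n' = 1 * n' := (one_mul n').symm
      _ < r * n' := by exact mul_lt_mul_of_pos_right hr.one_lt hn'0
    have hPn' : P n' := by
      refine ⟨hn'0, X', Y', ?_⟩
      have hcast : ((n : ℕ) : ℤ) = (r : ℤ) * (n' : ℤ) := by exact_mod_cast hn'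
      rw [hcast] at hXY
      have h7 : ((r : ℤ) * (r : ℤ)) * (e * X' ^ 2 + f * Y' ^ 2)
          = ((r : ℤ) * (r : ℤ)) * (4 * (n' : ℤ) ^ 2) := by linear_combination hXY
      exact mul_left_cancel₀ (mul_ne_zero hrz hrz) h7
    exact Nat.find_min hex hlt hPn'
  -- now extract the square
  have h0 : ((e * X ^ 2 + f * Y ^ 2 - 4 * (n : ℤ) ^ 2 : ℤ) : ZMod r) = 0 := by
    rw [show (e * X ^ 2 + f * Y ^ 2 - 4 * (n : ℤ) ^ 2 : ℤ) = 0 by linarith]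
    simp
  push_cast at h0
  have hfz : ((f : ZMod r)) = 0 := (ZMod.intCast_zmod_eq_zero_iff_dvd f r).mpr hrf
  rw [hfz] at h0
  have hXne : ((X : ℤ) : ZMod r) ≠ 0 := fun hz =>
    hrX ((ZMod.intCast_zmod_eq_zero_iff_dvd X r).mp hz)
  refine ⟨2 * (n : ZMod r) * ((X : ℤ) : ZMod r)⁻¹, ?_⟩
  field_simp
  linear_combination h0

lemma solve_pair {A B : ℤ} (hA : 0 < A) (hB : 0 < B) (hsfAB : Squarefree (A * B))
    (hne1 : A * B ≠ 1) (hAns : ¬ IsSquare A) (hBns : ¬ IsSquare B)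
    (hroots1 : ∀ p : ℕ, p.Prime → p ∣ A.natAbs → ∃ t : ℤ, (p : ℤ) ∣ t ^ 2 + B)
    (hroots2 : ∀ q : ℕ, q.Prime → q ∣ B.natAbs → ∃ t : ℤ, (q : ℤ) ∣ t ^ 2 - A) :
    ∃ u v w : ℤ, A * u ^ 2 - B * v ^ 2 = w ^ 2 ∧ ¬(u = 0 ∧ v = 0 ∧ w = 0) := by
  have hABns : ¬ IsSquare (A * B) := nsq_of_squarefree hsfAB hne1
  have hcop : IsCoprime A B := coprime_of_squarefree_mul hsfAB
  have hAa : ((A.natAbs : ℤ)) = A := Int.natAbs_of_nonneg hA.le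
  have hBa : ((B.natAbs : ℤ)) = B := Int.natAbs_of_nonneg hB.le
  have hsfA : Squarefree (A.natAbs) := by
    rw [← Int.squarefree_natAbs] at hsfAB
    rw [Int.natAbs_mul] at hsfAB
    exact (Nat.squarefree_mul_iff.mp hsfAB).2.1
  have hsfB : Squarefree (B.natAbs) := by
    rw [← Int.squarefree_natAbs] at hsfAB
    rw [Int.natAbs_mul] at hsfAB
    exact (Nat.squarefree_mul_iff.mp hsfAB).2.2
  -- glue square roots
  obtain ⟨α, hα⟩ := glue (-B) A.natAbs hsfA (by
    intro p hp hpd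
    obtain ⟨t, ht⟩ := hroots1 p hp hpd
    exact ⟨t, by rw [show t ^ 2 - -B = t ^ 2 + B by ring]; exact ht⟩)
  obtain ⟨β, hβ⟩ := glue A B.natAbs hsfB hroots2
  rw [hAa] at hα
  rw [hBa] at hβ
  -- CRT to get combined coefficients
  obtain ⟨Lv, hLv1, hLv2⟩ := crt2 A B α 0 hcop
  obtain ⟨Lu, hLu1, hLu2⟩ := crt2 A B 0 β hcop
  -- apply core with C = 1
  have hcore := core A B 1 hA hB one_pos hABns
    (by rw [one_mul]; exact hAns) (by rw [one_mul]; exact hBns)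
    (-Lu) (-Lv) 1 ?_
  · obtain ⟨u, v, w, huvw, hnt⟩ := hcore
    exact ⟨u, v, w, by linarith [huvw], hnt⟩
  · intro u v w hdvd
    have hdvd' : A * B ∣ (w - Lv * v - Lu * u) := by
      have e : w - Lv * v - Lu * u = (-Lu) * u + (-Lv) * v + 1 * w := by ring
      rw [e, show A * B = 1 * A * B by ring]
      exact hdvd
    have hwA : A ∣ (w - Lv * v - Lu * u) := (dvd_mul_right A B).trans hdvd'
    have hwB : B ∣ (w - Lv * v - Lu * u) := (dvd_mul_left B A).trans hdvd'
    have hαA : A ∣ α ^ 2 + B := by rwa [sub_neg_eq_add] at hα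
    have hLuA : A ∣ Lu := by simpa using hLu1
    have hLvB : B ∣ Lv := by simpa using hLv2
    have hQA : A ∣ (A * u ^ 2 - B * v ^ 2 - 1 * w ^ 2) := by
      have eA : A * u ^ 2 - B * v ^ 2 - 1 * w ^ 2
          = A * u ^ 2 - (α ^ 2 + B) * v ^ 2 - (Lv - α) * ((Lv + α) * v ^ 2)
            - Lu * (2 * Lv * v * u + Lu * u ^ 2)
            - (w - Lv * v - Lu * u) * (w + Lv * v + Lu * u) := by ring
      rw [eA]
      exact dvd_sub (dvd_sub (dvd_sub (dvd_sub (dvd_mul_right A (u ^ 2))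
        (hαA.mul_right _)) (hLv1.mul_right _)) (hLuA.mul_right _)) (hwA.mul_right _)
    have hQB : B ∣ (A * u ^ 2 - B * v ^ 2 - 1 * w ^ 2) := by
      have eB : A * u ^ 2 - B * v ^ 2 - 1 * w ^ 2
          = - ((β ^ 2 - A) * u ^ 2) - (Lu - β) * ((Lu + β) * u ^ 2)
            - Lv * (Lv * v ^ 2 + 2 * Lu * u * v) - B * v ^ 2
            - (w - Lv * v - Lu * u) * (w + Lv * v + Lu * u) := by ring
      rw [eB]
      exact dvd_sub (dvd_sub (dvd_sub (dvd_sub ((dvd_neg.mpr (hβ.mul_right _)))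
        (hLu2.mul_right _)) (hLvB.mul_right _)) (dvd_mul_right B (v ^ 2))) (hwB.mul_right _)
    rw [show (1 : ℤ) * A * B = A * B by ring]
    exact hcop.mul_dvd hQA hQB

lemma solve_pair2 {A B : ℤ} (hA : 0 < A) (hB : 0 < B)
    (hoddA : ¬ (2 : ℤ) ∣ A) (hoddB : ¬ (2 : ℤ) ∣ B)
    (hsfAB : Squarefree (A * B)) (hne1 : A * B ≠ 1)
    (hroots1 : ∀ p : ℕ, p.Prime → p ∣ A.natAbs → ∃ t : ℤ, (p : ℤ) ∣ t ^ 2 + 2 * B)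
    (hroots2 : ∀ q : ℕ, q.Prime → q ∣ B.natAbs → ∃ t : ℤ, (q : ℤ) ∣ t ^ 2 - 2 * A) :
    ∃ u v w : ℤ, A * u ^ 2 - B * v ^ 2 = 2 * w ^ 2 ∧ ¬(u = 0 ∧ v = 0 ∧ w = 0) := by
  have hABns : ¬ IsSquare (A * B) := nsq_of_squarefree hsfAB hne1
  have hcop : IsCoprime A B := coprime_of_squarefree_mul hsfAB
  have hAa : ((A.natAbs : ℤ)) = A := Int.natAbs_of_nonneg hA.le
  have hBa : ((B.natAbs : ℤ)) = B := Int.natAbs_of_nonneg hB.le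
  have hsfA : Squarefree (A.natAbs) := by
    rw [← Int.squarefree_natAbs, Int.natAbs_mul] at hsfAB
    exact (Nat.squarefree_mul_iff.mp hsfAB).2.1
  have hsfB : Squarefree (B.natAbs) := by
    rw [← Int.squarefree_natAbs, Int.natAbs_mul] at hsfAB
    exact (Nat.squarefree_mul_iff.mp hsfAB).2.2
  have hoddAB : ¬ (2 : ℤ) ∣ A * B := by
    intro h
    rcases (Int.prime_two.dvd_mul.mp h) with h' | h'
    exacts [hoddA h', hoddB h']
  have hcop2AB : IsCoprime (2 : ℤ) (A * B) := Int.prime_two.coprime_iff_not_dvd.mpr hoddAB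
  obtain ⟨α, hα⟩ := glue (-(2 * B)) A.natAbs hsfA (by
    intro p hp hpd
    obtain ⟨t, ht⟩ := hroots1 p hp hpd
    exact ⟨t, by rw [show t ^ 2 - -(2 * B) = t ^ 2 + 2 * B by ring]; exact ht⟩)
  obtain ⟨β, hβ⟩ := glue (2 * A) B.natAbs hsfB hroots2
  rw [hAa] at hα
  rw [hBa] at hβ
  have hαA : A ∣ α ^ 2 + 2 * B := by rwa [sub_neg_eq_add] at hα
  obtain ⟨Lv', hLv'1, hLv'2⟩ := crt2 A B α 0 hcop
  obtain ⟨Lu', hLu'1, hLu'2⟩ := crt2 A B 0 β hcop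
  obtain ⟨Lv, hLvAB, hLv2⟩ := crt2 (A * B) 2 Lv' 1 hcop2AB.symm
  obtain ⟨Lu, hLuAB, hLu2⟩ := crt2 (A * B) 2 Lu' 1 hcop2AB.symm
  have hLvα : A ∣ Lv - α := by
    have h1 : A ∣ Lv - Lv' := (dvd_mul_right A B).trans hLvAB
    have e : Lv - α = (Lv - Lv') + (Lv' - α) := by ring
    rw [e]; exact dvd_add h1 hLv'1
  have hLvB : B ∣ Lv := by
    have h1 : B ∣ Lv - Lv' := (dvd_mul_left B A).trans hLvAB
    have e : Lv = (Lv - Lv') + (Lv' - 0) := by ring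
    rw [e]; exact dvd_add h1 hLv'2
  have hLuβ : B ∣ Lu - β := by
    have h1 : B ∣ Lu - Lu' := (dvd_mul_left B A).trans hLuAB
    have e : Lu - β = (Lu - Lu') + (Lu' - β) := by ring
    rw [e]; exact dvd_add h1 hLu'2
  have hLuA : A ∣ Lu := by
    have h1 : A ∣ Lu - Lu' := (dvd_mul_right A B).trans hLuAB
    have e : Lu = (Lu - Lu') + (Lu' - 0) := by ring
    rw [e]; exact dvd_add h1 hLu'1
  have hcore := core A B 2 hA hB two_pos hABns
    (nsq_two_mul_odd hoddA) (nsq_two_mul_odd hoddB)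
    (-Lu) (-Lv) 2 ?_
  · exact hcore
  · intro u v w hdvd
    have hdvd' : 2 * A * B ∣ (2 * w - Lv * v - Lu * u) := by
      have e : 2 * w - Lv * v - Lu * u = (-Lu) * u + (-Lv) * v + 2 * w := by ring
      rw [e]; exact hdvd
    set L : ℤ := 2 * w - Lv * v - Lu * u with hL
    have hABdvd : (A * B : ℤ) ∣ 2 * A * B := ⟨2, by ring⟩
    have hwA : A ∣ L := ((dvd_mul_right A B).trans hABdvd).trans hdvd'
    have hwB : B ∣ L := ((dvd_mul_left B A).trans hABdvd).trans hdvd'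
    have hw2 : (2 : ℤ) ∣ L := (Dvd.intro (A * B) (by ring)).trans hdvd'
    set Q : ℤ := A * u ^ 2 - B * v ^ 2 - 2 * w ^ 2 with hQdef
    have hQA : A ∣ Q := by
      have h2Q : A ∣ 2 * Q := by
        have e : 2 * Q = A * (2 * u ^ 2) - (α ^ 2 + 2 * B) * v ^ 2
            - (Lv - α) * ((Lv + α) * v ^ 2) - Lu * (2 * Lv * v * u + Lu * u ^ 2)
            - L * (2 * w + Lv * v + Lu * u) := by rw [hQdef, hL]; ring
        rw [e]
        exact dvd_sub (dvd_sub (dvd_sub (dvd_sub (dvd_mul_right A _)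
          (hαA.mul_right _)) (hLvα.mul_right _)) (hLuA.mul_right _)) (hwA.mul_right _)
      exact (Int.prime_two.coprime_iff_not_dvd.mpr hoddA).symm.dvd_of_dvd_mul_left h2Q
    have hQB : B ∣ Q := by
      have h2Q : B ∣ 2 * Q := by
        have e : 2 * Q = - ((β ^ 2 - 2 * A) * u ^ 2) - (Lu - β) * ((Lu + β) * u ^ 2)
            - Lv * (Lv * v ^ 2 + 2 * Lu * u * v) - B * (2 * v ^ 2)
            - L * (2 * w + Lv * v + Lu * u) := by rw [hQdef, hL]; ring
        rw [e]
        exact dvd_sub (dvd_sub (dvd_sub (dvd_sub (dvd_neg.mpr (hβ.mul_right _))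
          (hLuβ.mul_right _)) (hLvB.mul_right _)) (dvd_mul_right B _)) (hwB.mul_right _)
      exact (Int.prime_two.coprime_iff_not_dvd.mpr hoddB).symm.dvd_of_dvd_mul_left h2Q
    have hQ2 : (2 : ℤ) ∣ Q := by
      have hXeven : (2 : ℤ) ∣ Lv * v + Lu * u := by
        have e : Lv * v + Lu * u = 2 * w - L := by rw [hL]; ring
        rw [e]; exact dvd_sub (dvd_mul_right 2 w) hw2
      have huv : (2 : ℤ) ∣ u + v := by
        have e : u + v = (Lv * v + Lu * u) - (Lv - 1) * v - (Lu - 1) * u := by ring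
        rw [e]; exact dvd_sub (dvd_sub hXeven (hLv2.mul_right _)) (hLu2.mul_right _)
      have hA1 : (2 : ℤ) ∣ A - 1 := by
        rcases Int.even_or_odd A with he | ho
        · exact absurd he.two_dvd hoddA
        · obtain ⟨k, hk⟩ := ho; exact ⟨k, by omega⟩
      have hB1 : (2 : ℤ) ∣ B - 1 := by
        rcases Int.even_or_odd B with he | ho
        · exact absurd he.two_dvd hoddB
        · obtain ⟨k, hk⟩ := ho; exact ⟨k, by omega⟩
      have huu : (2 : ℤ) ∣ u ^ 2 - u := by
        have := Int.even_mul_succ_self (u - 1)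
        obtain ⟨k, hk⟩ := this
        exact ⟨k, by nlinarith [hk]⟩
      have hvv : (2 : ℤ) ∣ v ^ 2 - v := by
        have := Int.even_mul_succ_self (v - 1)
        obtain ⟨k, hk⟩ := this
        exact ⟨k, by nlinarith [hk]⟩
      have e : Q = A * (u ^ 2 - u) - B * (v ^ 2 - v) + (A - 1) * u - (B - 1) * v
          + (u - v) - 2 * w ^ 2 := by rw [hQdef]; ring
      have huv' : (2 : ℤ) ∣ u - v := by
        have e2 : u - v = (u + v) - 2 * v := by ring
        rw [e2]; exact dvd_sub huv (dvd_mul_right 2 v)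
      rw [e]
      exact dvd_sub (dvd_add (dvd_sub (dvd_add (dvd_sub (huu.mul_left A) (hvv.mul_left B))
        (hA1.mul_right u)) (hB1.mul_right v)) huv') (dvd_mul_right 2 _)
    have : (2 : ℤ) * (A * B) ∣ Q := hcop2AB.mul_dvd hQ2 (hcop.mul_dvd hQA hQB)
    rwa [show (2 : ℤ) * (A * B) = 2 * A * B by ring] at this

lemma two_ne_zero_zmod {q : ℕ} (hq : q.Prime) (hq2 : q ≠ 2) : (2 : ZMod q) ≠ 0 := by
  haveI : Fact q.Prime := ⟨hq⟩
  intro hz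
  have h2 : ((2 : ℕ) : ZMod q) = 0 := by exact_mod_cast hz
  rw [ZMod.natCast_eq_zero_iff] at h2
  exact hq2 ((Nat.prime_dvd_prime_iff_eq hq Nat.prime_two).mp h2)

lemma isSquare_div_four {q : ℕ} (hq : q.Prime) (hq2 : q ≠ 2) {x : ℤ}
    (h : IsSquare ((4 * x : ℤ) : ZMod q)) : IsSquare ((x : ℤ) : ZMod q) := by
  haveI : Fact q.Prime := ⟨hq⟩
  have h2 : (2 : ZMod q) ≠ 0 := two_ne_zero_zmod hq hq2
  obtain ⟨r, hr⟩ := h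
  push_cast at hr
  refine ⟨r * (2 : ZMod q)⁻¹, ?_⟩
  field_simp
  linear_combination hr

lemma sum_two_squares_of_conditions {n : ℕ} (hn : Squarefree n)
    (h : ∀ q : ℕ, q.Prime → q ≠ 2 → q ∣ n → IsSquare (-1 : ZMod q)) :
    ∃ s t : ℕ, n = s ^ 2 + t ^ 2 := by
  apply Nat.eq_sq_add_sq_of_isSquare_mod_neg_one
  refine (ZMod.isSquare_neg_one_iff_forall_mem_primeFactors_mod_four_ne_three hn).mpr fun q hqm => ?_
  obtain ⟨hq, hqd, -⟩ := Nat.mem_primeFactors.mp hqm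
  rcases eq_or_ne q 2 with rfl | hq2
  · norm_num
  · haveI : Fact q.Prime := ⟨hq⟩
    exact ZMod.exists_sq_eq_neg_one_iff.mp (h q hq hq2 hqd)

lemma int_sol_of_rat {a b : ℤ} {x y : ℚ} (heq : (a : ℚ) * x ^ 2 - (b : ℚ) * y ^ 2 = 4) :
    ∃ n : ℕ, 0 < n ∧ ∃ X Y : ℤ, a * X ^ 2 + (-b) * Y ^ 2 = 4 * (n : ℤ) ^ 2 := by
  refine ⟨x.den * y.den, by positivity, x.num * y.den, y.num * x.den, ?_⟩
  have hxd : ((x.den : ℚ)) ≠ 0 := by exact_mod_cast x.den_nz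
  have hyd : ((y.den : ℚ)) ≠ 0 := by exact_mod_cast y.den_nz
  have hx : (x.num : ℚ) = x * x.den := (div_eq_iff hxd).mp (Rat.num_div_den x)
  have hy : (y.num : ℚ) = y * y.den := (div_eq_iff hyd).mp (Rat.num_div_den y)
  have key : ((a * (x.num * y.den) ^ 2 + (-b) * (y.num * x.den) ^ 2 : ℤ) : ℚ)
      = ((4 * ((x.den * y.den : ℕ) : ℤ) ^ 2 : ℤ) : ℚ) := by
    push_cast
    rw [hx, hy]
    linear_combination ((x.den : ℚ) * (y.den : ℚ)) ^ 2 * heq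
  exact_mod_cast key

lemma two_dvd_sq_add (x : ℤ) : (2 : ℤ) ∣ x ^ 2 + x := by
  obtain ⟨k, hk⟩ := Int.even_mul_succ_self x
  exact ⟨k, by nlinarith⟩

lemma two_dvd_sq_sub (x : ℤ) : (2 : ℤ) ∣ x ^ 2 - x := by
  obtain ⟨k, hk⟩ := Int.even_mul_succ_self (x - 1)
  exact ⟨k, by nlinarith⟩

lemma nat_dvd_to_int {p : ℕ} {a : ℤ} (ha : 0 ≤ a) (h : p ∣ a.natAbs) : (p : ℤ) ∣ a := by
  have := Int.natCast_dvd_natCast.mpr h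
  rwa [Int.natAbs_of_nonneg ha] at this

lemma int_dvd_to_nat {p : ℕ} {a : ℤ} (ha : 0 ≤ a) (h : (p : ℤ) ∣ a) : p ∣ a.natAbs := by
  rw [← Int.natAbs_of_nonneg ha] at h
  exact_mod_cast h

lemma sum2sq (d : ℤ) (hsf : Squarefree d) (hd0 : 0 < d) (hd1 : d ≠ 1)
    (h : ∀ q : ℕ, q.Prime → q ≠ 2 → (q : ℤ) ∣ d → IsSquare (-1 : ZMod q)) :
    ∃ s t : ℤ, d = s ^ 2 + t ^ 2 ∧ t ≠ 0 := by
  obtain ⟨s, t, hst⟩ := sum_two_squares_of_conditions (n := d.natAbs)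
    (Int.squarefree_natAbs.mpr hsf)
    (fun q hq hq2 hqd => h q hq hq2 (nat_dvd_to_int hd0.le hqd))
  have hd : d = (s : ℤ) ^ 2 + (t : ℤ) ^ 2 := by
    have h2 : ((d.natAbs : ℕ) : ℤ) = ((s ^ 2 + t ^ 2 : ℕ) : ℤ) := by exact_mod_cast hst
    rw [Int.natAbs_of_nonneg hd0.le] at h2
    push_cast at h2
    exact h2
  rcases eq_or_ne (t : ℤ) 0 with ht | ht
  · exact absurd ⟨(s : ℤ), by rw [hd, ht]; ring⟩ (nsq_of_squarefree hsf hd1)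
  · exact ⟨s, t, hd, ht⟩

/-- For `Δ > 0` and positive integers `a, b` with `ab = Δ`,
the first descendant `ax² - by² = 4` has a rational point iff `a` is a quadratic
residue modulo every odd prime dividing `b` and `-b` is a quadratic residue modulo
every odd prime dividing `a`. -/
theorem descendant_rational_point_iff (d : ℤ) (hsf : Squarefree d) (hd0 : d ≠ 0)
    (hd1 : d ≠ 1) (Δ : ℤ) (hΔ : Δ = if d % 4 = 1 then d else 4 * d) (hΔpos : 0 < Δ)
    (a b : ℤ) (ha : 0 < a) (hb : 0 < b) (hab : a * b = Δ) :
    (∃ x y : ℚ, (a : ℚ) * x ^ 2 - (b : ℚ) * y ^ 2 = 4) ↔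
      ((∀ q : ℕ, q.Prime → q ≠ 2 → (q : ℤ) ∣ b → IsSquare ((a : ZMod q))) ∧
       (∀ p : ℕ, p.Prime → p ≠ 2 → (p : ℤ) ∣ a → IsSquare (((-b : ℤ) : ZMod p)))) := by
  have hd_pos : 0 < d := by
    by_cases h : d % 4 = 1
    · rwa [hΔ, if_pos h] at hΔpos
    · rw [hΔ, if_neg h] at hΔpos; linarith
  have hd_nsq : ¬ IsSquare d := nsq_of_squarefree hsf hd1
  constructor
  · -- forward direction
    rintro ⟨x, y, hxy⟩
    have hsq_not : ∀ r : ℕ, r.Prime → r ≠ 2 → ¬ ((r : ℤ) * r ∣ Δ) := by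
      intro r hr hr2 hdvd
      have pr : Prime (r : ℤ) := Nat.prime_iff_prime_int.mp hr
      have hrd : (r : ℤ) * r ∣ d := by
        by_cases h : d % 4 = 1
        · rwa [hΔ, if_pos h] at hdvd
        · rw [hΔ, if_neg h] at hdvd
          have hr4 : ¬ (r : ℤ) ∣ 4 := by
            intro h4
            have h2 : (r : ℤ) ∣ 2 := by
              rcases pr.dvd_mul.mp (show (r : ℤ) ∣ 2 * 2 by norm_num; exact_mod_cast h4)
                with h' | h' <;> exact h'
            have hle : (r : ℤ) ≤ 2 := Int.le_of_dvd (by norm_num) h2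
            have : r ≤ 2 := by exact_mod_cast hle
            exact hr2 (le_antisymm this hr.two_le)
          have h1 : (r : ℤ) ^ 1 ∣ 4 * d := by
            rw [pow_one]; exact (dvd_mul_right _ _).trans hdvd
          have h2' : (r : ℤ) * r ∣ d * d := by
            have ha' : (r : ℤ) ∣ d := by
              have := pr.pow_dvd_of_dvd_mul_left 1 hr4 h1
              rwa [pow_one] at this
            exact mul_dvd_mul ha' ha'
          have h3 : (r : ℤ) ^ 2 ∣ 4 * d := by rw [pow_two]; exact hdvd
          have h4 : (r : ℤ) ^ 2 ∣ d := pr.pow_dvd_of_dvd_mul_left 2 hr4 h3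
          rwa [pow_two] at h4
      exact pr.not_unit (hsf (r : ℤ) hrd)
    obtain ⟨n, hn, X, Y, hXY⟩ := int_sol_of_rat hxy
    constructor
    · intro q hq hq2 hqb
      refine key_step a (-b) q hq hq2 (dvd_neg.mpr hqb) ?_ ⟨n, hn, X, Y, hXY⟩
      rw [dvd_neg]
      intro hc
      exact hsq_not q hq hq2 (hc.trans (by rw [← hab]; exact dvd_mul_left b a))
    · intro p hp hp2 hpa
      refine key_step (-b) a p hp hp2 hpa ?_ ⟨n, hn, Y, X, by linarith⟩
      intro hc
      exact hsq_not p hp hp2 (hc.trans (by rw [← hab]; exact dvd_mul_right a b))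
  · -- reverse direction
    rintro ⟨hQRb, hQRa⟩
    by_cases ha1 : a = 1
    · exact ⟨2, 0, by rw [ha1]; norm_num⟩
    by_cases hmod : d % 4 = 1
    · -- Δ = d
      have hΔd : Δ = d := by rw [hΔ, if_pos hmod]
      have habd : a * b = d := by rw [hab, hΔd]
      have hsfa : Squarefree a := Squarefree.squarefree_of_dvd ⟨b, habd.symm⟩ hsf
      have hsfb : Squarefree b := Squarefree.squarefree_of_dvd ⟨a, by rw [← habd]; ring⟩ hsf
      by_cases hb1 : b = 1
      · subst hb1
        have had : a = d := by rw [← habd]; ring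
        obtain ⟨s, t, hst, ht⟩ := sum2sq d hsf hd_pos hd1 (by
          intro q hq hq2 hqd
          have := hQRa q hq hq2 (by rw [had]; exact hqd)
          simpa using this)
        refine rat_point_of_int (by rw [mul_one, had]; exact hd_nsq)
          (u := 2) (v := 2 * s) (w := t) (by simp) ?_
        rw [had]
        linear_combination 4 * hst
      · -- general case C1
        have hroots1 : ∀ p : ℕ, p.Prime → p ∣ a.natAbs → ∃ t : ℤ, (p : ℤ) ∣ t ^ 2 + b := by
          intro p hp hpd
          rcases eq_or_ne p 2 with rfl | hp2
          · exact ⟨b, by push_cast; exact two_dvd_sq_add b⟩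
          · obtain ⟨t, ht⟩ := root_of_isSquare hp (hQRa p hp hp2 (nat_dvd_to_int ha.le hpd))
            exact ⟨t, by rw [show t ^ 2 + b = t ^ 2 - (-b) by ring]; exact ht⟩
        have hroots2 : ∀ q : ℕ, q.Prime → q ∣ b.natAbs → ∃ t : ℤ, (q : ℤ) ∣ t ^ 2 - a := by
          intro q hq hqd
          rcases eq_or_ne q 2 with rfl | hq2
          · exact ⟨a, by push_cast; exact two_dvd_sq_sub a⟩
          · exact root_of_isSquare hq (hQRb q hq hq2 (nat_dvd_to_int hb.le hqd))
        obtain ⟨u, v, w, huvw, hnt⟩ := solve_pair ha hb (by rw [habd]; exact hsf)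
          (by rw [habd]; exact hd1) (nsq_of_squarefree hsfa ha1)
          (nsq_of_squarefree hsfb hb1) hroots1 hroots2
        refine rat_point_of_int (by rw [habd]; exact hd_nsq)
          (u := 2 * u) (v := 2 * v) (w := w) ?_ (by linear_combination 4 * huvw)
        rintro ⟨h1, h2, h3⟩
        exact hnt ⟨by linarith, by linarith, h3⟩
    · -- Δ = 4d
      have hΔ4 : Δ = 4 * d := by rw [hΔ, if_neg hmod]
      have habd4 : a * b = 4 * d := by rw [hab, hΔ4]
      have hab_nsq : ¬ IsSquare (a * b) := by rw [habd4]; exact nsq_four_mul hd_nsq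
      by_cases h4a : (4 : ℤ) ∣ a
      · obtain ⟨a₀, ha₀⟩ := h4a
        have ha₀pos : 0 < a₀ := by omega
        have habd : a₀ * b = d := by
          have h4 : 4 * (a₀ * b) = 4 * d := by rw [← habd4, ha₀]; ring
          linarith
        have hsfa₀ : Squarefree a₀ := Squarefree.squarefree_of_dvd ⟨b, habd.symm⟩ hsf
        have hsfb : Squarefree b := Squarefree.squarefree_of_dvd ⟨a₀, by rw [← habd]; ring⟩ hsf
        by_cases ha4 : a₀ = 1
        · exact ⟨1, 0, by rw [ha₀, ha4]; norm_num⟩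
        by_cases hb1 : b = 1
        · subst hb1
          have had : a₀ = d := by rw [← habd]; ring
          obtain ⟨s, t, hst, ht⟩ := sum2sq d hsf hd_pos hd1 (by
            intro q hq hq2 hqd
            have := hQRa q hq hq2 (by rw [ha₀, had]; exact Dvd.dvd.mul_left hqd 4)
            simpa using this)
          refine rat_point_of_int (by rw [mul_one, ha₀, had]; exact nsq_four_mul hd_nsq)
            (u := 1) (v := 2 * s) (w := t) (by simp) ?_
          rw [ha₀, had]
          linear_combination 4 * hst
        · have hroots1 : ∀ p : ℕ, p.Prime → p ∣ a₀.natAbs → ∃ t : ℤ, (p : ℤ) ∣ t ^ 2 + b := by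
            intro p hp hpd
            rcases eq_or_ne p 2 with rfl | hp2
            · exact ⟨b, by push_cast; exact two_dvd_sq_add b⟩
            · have hpa : (p : ℤ) ∣ a := by
                rw [ha₀]; exact (nat_dvd_to_int ha₀pos.le hpd).mul_left 4
              obtain ⟨t, ht⟩ := root_of_isSquare hp (hQRa p hp hp2 hpa)
              exact ⟨t, by rw [show t ^ 2 + b = t ^ 2 - (-b) by ring]; exact ht⟩
          have hroots2 : ∀ q : ℕ, q.Prime → q ∣ b.natAbs → ∃ t : ℤ, (q : ℤ) ∣ t ^ 2 - a₀ := by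
            intro q hq hqd
            rcases eq_or_ne q 2 with rfl | hq2
            · exact ⟨a₀, by push_cast; exact two_dvd_sq_sub a₀⟩
            · have hsq : IsSquare ((a : ZMod q)) := hQRb q hq hq2 (nat_dvd_to_int hb.le hqd)
              have hsq' : IsSquare (((4 * a₀ : ℤ) : ZMod q)) := by rw [← ha₀]; exact hsq
              exact root_of_isSquare hq (isSquare_div_four hq hq2 hsq')
          obtain ⟨u, v, w, huvw, hnt⟩ := solve_pair ha₀pos hb (by rw [habd]; exact hsf)
            (by rw [habd]; exact hd1) (nsq_of_squarefree hsfa₀ ha4)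
            (nsq_of_squarefree hsfb hb1) hroots1 hroots2
          refine rat_point_of_int hab_nsq (u := u) (v := 2 * v) (w := w) ?_
            (by rw [ha₀]; linear_combination 4 * huvw)
          rintro ⟨h1, h2, h3⟩
          exact hnt ⟨h1, by linarith, h3⟩
      by_cases h4b : (4 : ℤ) ∣ b
      · obtain ⟨b₀, hb₀⟩ := h4b
        have hb₀pos : 0 < b₀ := by omega
        have habd : a * b₀ = d := by
          have h4 : 4 * (a * b₀) = 4 * d := by rw [← habd4, hb₀]; ring
          linarith
        have hsfa : Squarefree a := Squarefree.squarefree_of_dvd ⟨b₀, habd.symm⟩ hsf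
        have hsfb₀ : Squarefree b₀ := Squarefree.squarefree_of_dvd ⟨a, by rw [← habd]; ring⟩ hsf
        by_cases hb4 : b₀ = 1
        · have had : a = d := by rw [← habd, hb4]; ring
          obtain ⟨s, t, hst, ht⟩ := sum2sq d hsf hd_pos hd1 (by
            intro p hp hp2 hpd
            have h1 := hQRa p hp hp2 (by rw [had]; exact hpd)
            have h2 : IsSquare (((4 * (-1) : ℤ) : ZMod p)) := by
              rw [show ((4 : ℤ) * (-1)) = -b by rw [hb₀, hb4]; ring]
              exact h1
            have := isSquare_div_four hp hp2 h2
            simpa using this)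
          refine rat_point_of_int hab_nsq (u := 2) (v := s) (w := t) (by simp) ?_
          rw [had, hb₀, hb4]
          linear_combination 4 * hst
        · have hroots1 : ∀ p : ℕ, p.Prime → p ∣ a.natAbs → ∃ t : ℤ, (p : ℤ) ∣ t ^ 2 + b₀ := by
            intro p hp hpd
            rcases eq_or_ne p 2 with rfl | hp2
            · exact ⟨b₀, by push_cast; exact two_dvd_sq_add b₀⟩
            · have h1 := hQRa p hp hp2 (nat_dvd_to_int ha.le hpd)
              have h2 : IsSquare (((4 * (-b₀) : ℤ) : ZMod p)) := by
                rw [show ((4 : ℤ) * (-b₀)) = -b by rw [hb₀]; ring]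
                exact h1
              obtain ⟨t, ht⟩ := root_of_isSquare hp (isSquare_div_four hp hp2 h2)
              exact ⟨t, by rw [show t ^ 2 + b₀ = t ^ 2 - (-b₀) by ring]; exact ht⟩
          have hroots2 : ∀ q : ℕ, q.Prime → q ∣ b₀.natAbs → ∃ t : ℤ, (q : ℤ) ∣ t ^ 2 - a := by
            intro q hq hqd
            rcases eq_or_ne q 2 with rfl | hq2
            · exact ⟨a, by push_cast; exact two_dvd_sq_sub a⟩
            · have hqb : (q : ℤ) ∣ b := by
                rw [hb₀]; exact (nat_dvd_to_int hb₀pos.le hqd).mul_left 4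
              exact root_of_isSquare hq (hQRb q hq hq2 hqb)
          obtain ⟨u, v, w, huvw, hnt⟩ := solve_pair ha hb₀pos (by rw [habd]; exact hsf)
            (by rw [habd]; exact hd1) (nsq_of_squarefree hsfa ha1)
            (nsq_of_squarefree hsfb₀ hb4) hroots1 hroots2
          refine rat_point_of_int hab_nsq (u := 2 * u) (v := v) (w := w) ?_
            (by rw [hb₀]; linear_combination 4 * huvw)
          rintro ⟨h1, h2, h3⟩
          exact hnt ⟨by linarith, h2, h3⟩
      · -- a ≡ b ≡ 2 (mod 4)
        have p2 : Prime (2 : ℤ) := Int.prime_two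
        have h4ab : (2 : ℤ) ^ 2 ∣ a * b := by rw [habd4]; exact ⟨d, by ring⟩
        have h2a : (2 : ℤ) ∣ a := by
          by_contra h
          refine h4b ?_
          have := p2.pow_dvd_of_dvd_mul_left 2 h h4ab
          rwa [show ((2 : ℤ)) ^ 2 = 4 by norm_num] at this
        have h2b : (2 : ℤ) ∣ b := by
          by_contra h
          refine h4a ?_
          have := p2.pow_dvd_of_dvd_mul_right 2 h h4ab
          rwa [show ((2 : ℤ)) ^ 2 = 4 by norm_num] at this
        obtain ⟨a₀, ha₀⟩ := h2a
        obtain ⟨b₀, hb₀⟩ := h2b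
        have hoddA : ¬ (2 : ℤ) ∣ a₀ := by
          rintro ⟨k, hk⟩
          exact h4a ⟨k, by rw [ha₀, hk]; ring⟩
        have hoddB : ¬ (2 : ℤ) ∣ b₀ := by
          rintro ⟨k, hk⟩
          exact h4b ⟨k, by rw [hb₀, hk]; ring⟩
        have ha₀pos : 0 < a₀ := by omega
        have hb₀pos : 0 < b₀ := by omega
        have habd : a₀ * b₀ = d := by
          have h4 : 4 * (a₀ * b₀) = 4 * d := by rw [← habd4, ha₀, hb₀]; ring
          linarith
        have hroots1 : ∀ p : ℕ, p.Prime → p ∣ a₀.natAbs →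
            ∃ t : ℤ, (p : ℤ) ∣ t ^ 2 + 2 * b₀ := by
          intro p hp hpd
          rcases eq_or_ne p 2 with rfl | hp2
          · exact absurd (nat_dvd_to_int ha₀pos.le hpd) (by exact_mod_cast hoddA)
          · have hpa : (p : ℤ) ∣ a := by
              rw [ha₀]; exact (nat_dvd_to_int ha₀pos.le hpd).mul_left 2
            obtain ⟨t, ht⟩ := root_of_isSquare hp (hQRa p hp hp2 hpa)
            exact ⟨t, by rw [show t ^ 2 + 2 * b₀ = t ^ 2 - (-b) by rw [hb₀]; ring]; exact ht⟩
        have hroots2 : ∀ q : ℕ, q.Prime → q ∣ b₀.natAbs →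
            ∃ t : ℤ, (q : ℤ) ∣ t ^ 2 - 2 * a₀ := by
          intro q hq hqd
          rcases eq_or_ne q 2 with rfl | hq2
          · exact absurd (nat_dvd_to_int hb₀pos.le hqd) (by exact_mod_cast hoddB)
          · have hqb : (q : ℤ) ∣ b := by
              rw [hb₀]; exact (nat_dvd_to_int hb₀pos.le hqd).mul_left 2
            obtain ⟨t, ht⟩ := root_of_isSquare hq (hQRb q hq hq2 hqb)
            exact ⟨t, by rw [show t ^ 2 - 2 * a₀ = t ^ 2 - a by rw [ha₀]]; exact ht⟩
        obtain ⟨u, v, w, huvw, hnt⟩ := solve_pair2 ha₀pos hb₀pos hoddA hoddB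
          (by rw [habd]; exact hsf) (by rw [habd]; exact hd1) hroots1 hroots2
        exact rat_point_of_int hab_nsq (u := u) (v := v) (w := w) hnt
          (by rw [ha₀, hb₀]; linear_combination 2 * huvw)
end
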